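/- The filter F on ω^ω of all sets whose complement has order type less than ω^ω does not satisfy the following property (*): whenever f : ω^ω → ℕ is unbounded on every member of F, there is an F-positive set A such that f restricted to A is finite-to-one. -/

import Mathlib

/-- The order type of a set of ordinals. -/
noncomputable def otype {α : Type*} [LinearOrder α] [WellFoundedLT α] (S : Set α) : Ordinal :=
  Ordinal.type ((· < ·) : S → S → Prop)

/-!
Let `f x` be the least `n` with `x < ω ^ n`. If `f` were bounded by `n` on some `B`, then `Bᶜ`
would contain the tail `[ω ^ n, ω ^ ω)`, which has order type `ω ^ ω`; so `f` is unbounded on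
every member of the filter. On the other hand `f` is monotone, so if it is finite-to-one on `A`,
every proper initial segment of `A` is finite and `A` has order type at most `ω`. Then `Aᶜ` is a
member of the filter disjoint from `A`, and `A` is not positive.
-/

open Ordinal Set Order

theorem Ordinal.lift_opow (a b : Ordinal.{v}) : lift.{u} (a ^ b) = lift.{u} a ^ lift.{u} b := by
  induction b using Ordinal.limitRecOn with
  | zero => simp
  | add_one b ih => rw [opow_add_one, lift_mul, ih, lift_add_one, opow_add_one]
  | limit b hb ih =>
    rcases lt_trichotomy a 1 with ha | rfl | ha
    · obtain rfl := lt_one_iff.1 ha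
      simp [zero_opow hb.ne_bot, zero_opow (isSuccLimit_lift.2 hb).ne_bot]
    · simp
    have ha' : 1 < lift.{u} a := by simpa using lift_lt.2 ha
    apply le_antisymm
    · refine ((liftInitialSeg.isNormal.comp (isNormal_opow ha)).le_iff_forall_le hb).2
        fun c hc => ?_
      simp only [Function.comp_apply, liftInitialSeg_coe, ih c hc]
      exact opow_le_opow_right (zero_lt_one.trans ha') (lift_le.2 hc.le)
    · refine ((isNormal_opow ha').le_iff_forall_le (isSuccLimit_lift.2 hb)).2 fun c hc => ?_
      obtain ⟨c, rfl⟩ := mem_range_lift_of_le hc.le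
      rw [← ih c (lift_lt.1 hc)]
      exact lift_le.2 (opow_le_opow_right (zero_lt_one.trans ha) (lift_lt.1 hc).le)

theorem Ordinal.lt_omega0_opow_omega0_iff {a : Ordinal} :
    a < ω ^ ω ↔ ∃ n : ℕ, a < ω ^ (n : Ordinal) := by
  rw [(isNormal_opow one_lt_omega0).lt_iff_exists_lt isSuccLimit_omega0]
  constructor
  · rintro ⟨c, hc, hac⟩
    obtain ⟨n, rfl⟩ := lt_omega0.1 hc
    exact ⟨n, hac⟩
  · rintro ⟨n, hn⟩
    exact ⟨n, natCast_lt_omega0 n, hn⟩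

theorem Monotone.finite_inter_Iio_of_finite_fibers {α : Type*} [Preorder α] {f : α → ℕ}
    (hf : Monotone f) {S : Set α} (hS : ∀ k, {a ∈ S | f a = k}.Finite) (a : α) :
    (S ∩ Iio a).Finite := by
  refine ((finite_le_nat (f a)).biUnion fun k _ => hS k).subset ?_
  rintro b ⟨hbS, hba⟩
  exact mem_biUnion (hf hba.le) ⟨hbS, rfl⟩

theorem otype_le_omega0_of_finite_Iio {α : Type*} [LinearOrder α] [WellFoundedLT α] {S : Set α}
    (hS : ∀ a ∈ S, (S ∩ Iio a).Finite) : otype S ≤ ω := by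
  refine le_of_forall_lt fun o ho => ?_
  obtain ⟨a, rfl⟩ := typein_surj _ ho
  have hfin : (Iio a).Finite :=
    ((hS a a.2).preimage Subtype.val_injective.injOn).subset fun b hb => ⟨b.2, hb⟩
  rwa [← type_Iio_lt, ← card_lt_aleph0, card_type, Cardinal.lt_aleph0_iff_set_finite]

theorem lift_le_otype_compl {o c : Ordinal.{u}} (ho : IsPrincipal (· + ·) o) (hc : c < o)
    {B : Set (Iio o)} (hB : ∀ x ∈ B, x.1 < c) : lift.{u + 1} o ≤ otype Bᶜ := by
  let shift : Iio o ↪o (Bᶜ : Set (Iio o)) := OrderEmbedding.ofStrictMono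
    (fun x => ⟨⟨c + x, ho hc x.2⟩, fun hx => (hB _ hx).not_ge le_self_add⟩)
    (fun _ _ hxy => (add_lt_add_iff_left c).2 hxy)
  rw [← type_lt_Iio]
  exact shift.ltEmbedding.ordinal_type_le

noncomputable def omegaPowIndex (x : Iio (ω ^ ω)) : ℕ :=
  Nat.find (lt_omega0_opow_omega0_iff.1 x.2)

theorem lt_omega0_opow_omegaPowIndex (x : Iio (ω ^ ω)) :
    x.1 < ω ^ (omegaPowIndex x : Ordinal) :=
  Nat.find_spec (lt_omega0_opow_omega0_iff.1 x.2)

theorem omegaPowIndex_mono : Monotone omegaPowIndex := fun _ y hxy =>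
  Nat.find_min' _ ((Subtype.coe_le_coe.2 hxy).trans_lt (lt_omega0_opow_omegaPowIndex y))

theorem infinite_omegaPowIndex_image {B : Set (Iio (ω ^ ω))} (hB : otype Bᶜ < ω ^ ω) :
    (omegaPowIndex '' B).Infinite := by
  intro hfin
  obtain ⟨n, hn⟩ := hfin.bddAbove
  have hBn : ∀ x ∈ B, x.1 < ω ^ (n : Ordinal) := fun x hx =>
    (lt_omega0_opow_omegaPowIndex x).trans_le
      (opow_le_opow_right omega0_pos (Nat.cast_le.2 (hn ⟨x, hx, rfl⟩)))
  have hle := lift_le_otype_compl (isPrincipal_add_omega0_opow ω)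
    ((opow_lt_opow_iff_right one_lt_omega0).2 (natCast_lt_omega0 n)) hBn
  rw [lift_opow, lift_omega0] at hle
  exact hB.not_ge hle

/-- The filter `F` on `ω^ω` of all sets whose complement has order type `< ω^ω` does not
satisfy property (*): there is a function `f : ω^ω → ℕ` that is unbounded (has infinite
image) on every member of `F`, yet `f` is not finite-to-one on any `F`-positive set. -/
theorem tail_filter_not_star :
    ¬ (∀ f : Set.Iio (Ordinal.omega0 ^ Ordinal.omega0) → ℕ,
        (∀ B : Set (Set.Iio (Ordinal.omega0 ^ Ordinal.omega0)),
          otype Bᶜ < Ordinal.omega0 ^ Ordinal.omega0 → (f '' B).Infinite) →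
        ∃ A : Set (Set.Iio (Ordinal.omega0 ^ Ordinal.omega0)),
          (∀ B : Set (Set.Iio (Ordinal.omega0 ^ Ordinal.omega0)),
            otype Bᶜ < Ordinal.omega0 ^ Ordinal.omega0 → (A ∩ B).Nonempty) ∧
          ∀ k : ℕ, {o ∈ A | f o = k}.Finite) := by
  intro hstar
  obtain ⟨A, hApos, hAfib⟩ := hstar omegaPowIndex fun _ => infinite_omegaPowIndex_image
  have hAsmall : otype A < ω ^ ω :=
    (otype_le_omega0_of_finite_Iio fun a _ =>
      omegaPowIndex_mono.finite_inter_Iio_of_finite_fibers hAfib a).trans_lt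
      (left_lt_opow one_lt_omega0 one_lt_omega0)
  obtain ⟨x, hxA, hxAc⟩ := hApos Aᶜ (by rwa [compl_compl])
  exact hxAc hxA
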